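/- Under the conditional Markov chain Z → X → W_post given W_pre, if additionally W_pre is independent of (X, Z) (the passive/batch setting), then I(W_post; Z | W_pre) ≤ I(X; Z). -/

import Mathlib

open scoped BigOperators

namespace PhysIntel

variable {Ω : Type*} [Fintype Ω]

/-- `p` is a probability mass function on the finite sample space `Ω`. -/
def IsPMF {Ω : Type*} [Fintype Ω] (p : Ω → ℝ) : Prop :=
  (∀ ω, 0 ≤ p ω) ∧ ∑ ω, p ω = 1

/-- Pushforward probability `P[X = a]` of a random variable `X` under pmf `p`. -/
def prob (p : Ω → ℝ) {A : Type*} [DecidableEq A] (X : Ω → A) (a : A) : ℝ :=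
  ∑ ω, if X ω = a then p ω else 0

/-- Shannon entropy of `X` in bits. -/
noncomputable def H (p : Ω → ℝ) {A : Type*} [Fintype A] [DecidableEq A] (X : Ω → A) : ℝ :=
  -∑ a, prob p X a * Real.logb 2 (prob p X a)

/-- Mutual information `I(X;Y)` in bits. -/
noncomputable def MI (p : Ω → ℝ) {A B : Type*} [Fintype A] [DecidableEq A]
    [Fintype B] [DecidableEq B] (X : Ω → A) (Y : Ω → B) : ℝ :=
  H p X + H p Y - H p (fun ω => (X ω, Y ω))

/-- Conditional mutual information `I(X;Y|Z)` in bits. -/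
noncomputable def cMI (p : Ω → ℝ) {A B C : Type*} [Fintype A] [DecidableEq A]
    [Fintype B] [DecidableEq B] [Fintype C] [DecidableEq C]
    (X : Ω → A) (Y : Ω → B) (Z : Ω → C) : ℝ :=
  H p (fun ω => (X ω, Z ω)) + H p (fun ω => (Y ω, Z ω))
    - H p (fun ω => (X ω, Y ω, Z ω)) - H p Z

/-- Independence of two random variables. -/
def Indep (p : Ω → ℝ) {A B : Type*} [DecidableEq A] [DecidableEq B]
    (X : Ω → A) (Y : Ω → B) : Prop :=
  ∀ a b, prob p (fun ω => (X ω, Y ω)) (a, b) = prob p X a * prob p Y b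

/-- Conditional independence `X ⫫ Y | Z`. -/
def CondIndep (p : Ω → ℝ) {A B C : Type*} [DecidableEq A] [DecidableEq B] [DecidableEq C]
    (X : Ω → A) (Y : Ω → B) (Z : Ω → C) : Prop :=
  ∀ a b c, prob p (fun ω => (X ω, Y ω, Z ω)) (a, b, c) * prob p Z c
    = prob p (fun ω => (X ω, Z ω)) (a, c) * prob p (fun ω => (Y ω, Z ω)) (b, c)

/-- Joint pmf on `A × O` induced by input distribution `q` and channel kernel `k`. -/
def chanJoint {A O : Type*} (q : A → ℝ) (k : A → O → ℝ) : A × O → ℝ :=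
  fun ao => q ao.1 * k ao.1 ao.2

/-- Mutual information between channel input and output for input distribution `q`. -/
noncomputable def chanMI {A O : Type*} [Fintype A] [DecidableEq A]
    [Fintype O] [DecidableEq O] (q : A → ℝ) (k : A → O → ℝ) : ℝ :=
  MI (chanJoint q k) Prod.fst Prod.snd

/-- Empowerment: channel capacity `sup_{p(A)} I(A;O)`. -/
noncomputable def empowerment {A O : Type*} [Fintype A] [DecidableEq A]
    [Fintype O] [DecidableEq O] (k : A → O → ℝ) : ℝ :=
  sSup {x | ∃ q : A → ℝ, IsPMF q ∧ x = chanMI q k}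

/-- Expected cost of an input distribution. -/
def expCost {A : Type*} [Fintype A] (q : A → ℝ) (c : A → ℝ) : ℝ :=
  ∑ a, q a * c a

/-- Cost-constrained empowerment curve `ℰ(E₀)`. -/
noncomputable def empCurve {A O : Type*} [Fintype A] [DecidableEq A]
    [Fintype O] [DecidableEq O] (k : A → O → ℝ) (c : A → ℝ) (E₀ : ℝ) : ℝ :=
  sSup {x | ∃ q : A → ℝ, IsPMF q ∧ expCost q c ≤ E₀ ∧ x = chanMI q k}

set_option linter.unusedSectionVars false
section Helpers
variable {p : Ω → ℝ}
variable {A B C : Type*} [Fintype A] [DecidableEq A] [Fintype B] [DecidableEq B]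
  [Fintype C] [DecidableEq C]

lemma prob_nonneg (hp : IsPMF p) (X : Ω → A) (a : A) : 0 ≤ prob p X a :=
  Finset.sum_nonneg fun ω _ => by by_cases h : X ω = a <;> simp [h, hp.1 ω]

lemma sum_prob (hp : IsPMF p) (X : Ω → A) : ∑ a, prob p X a = 1 := by
  unfold prob
  rw [Finset.sum_comm, ← hp.2]
  refine Finset.sum_congr rfl fun ω _ => ?_
  simp

lemma prob_congr {f : Ω → A} {g : Ω → B} {a : A} {b : B}
    (h : ∀ ω, f ω = a ↔ g ω = b) : prob p f a = prob p g b :=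
  Finset.sum_congr rfl fun ω _ => by simp only [h ω]

lemma prob_fst (X : Ω → A) (Y : Ω → B) (a : A) :
    ∑ b, prob p (fun ω => (X ω, Y ω)) (a, b) = prob p X a := by
  unfold prob
  rw [Finset.sum_comm]
  refine Finset.sum_congr rfl fun ω _ => ?_
  by_cases h : X ω = a <;> simp [Prod.ext_iff, h]

lemma prob_snd (X : Ω → A) (Y : Ω → B) (b : B) :
    ∑ a, prob p (fun ω => (X ω, Y ω)) (a, b) = prob p Y b := by
  unfold prob
  rw [Finset.sum_comm]
  refine Finset.sum_congr rfl fun ω _ => ?_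
  by_cases h : Y ω = b <;> simp [Prod.ext_iff, h]

lemma marg_mid (X : Ω → A) (Y : Ω → B) (W : Ω → C) : ∀ (a : A) (c : C),
    ∑ b, prob p (fun ω => (X ω, Y ω, W ω)) (a, b, c)
      = prob p (fun ω => (X ω, W ω)) (a, c) := by
  intro a c
  have h : ∀ b, prob p (fun ω => (X ω, Y ω, W ω)) (a, b, c)
      = prob p (fun ω => ((X ω, W ω), Y ω)) ((a, c), b) := fun b =>
    prob_congr (fun ω => by simp [Prod.ext_iff]; tauto)
  simp_rw [h]
  exact prob_fst _ _ _

lemma marg_fst (X : Ω → A) (Y : Ω → B) (W : Ω → C) : ∀ (b : B) (c : C),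
    ∑ a, prob p (fun ω => (X ω, Y ω, W ω)) (a, b, c)
      = prob p (fun ω => (Y ω, W ω)) (b, c) := fun b c =>
  prob_snd X (fun ω => (Y ω, W ω)) (b, c)

lemma marg_w (X : Ω → A) (Y : Ω → B) (W : Ω → C) : ∀ (c : C),
    ∑ a, ∑ b, prob p (fun ω => (X ω, Y ω, W ω)) (a, b, c) = prob p W c := by
  intro c
  simp_rw [marg_mid X Y W]
  exact prob_snd X W c

lemma H_pair (X : Ω → A) (Y : Ω → B) :
    H p (fun ω => (X ω, Y ω)) = -∑ a, ∑ b,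
      prob p (fun ω => (X ω, Y ω)) (a, b)
        * Real.logb 2 (prob p (fun ω => (X ω, Y ω)) (a, b)) := by
  simp [H, Fintype.sum_prod_type]

lemma H_triple (X : Ω → A) (Y : Ω → B) (W : Ω → C) :
    H p (fun ω => (X ω, Y ω, W ω)) = -∑ a, ∑ b, ∑ c,
      prob p (fun ω => (X ω, Y ω, W ω)) (a, b, c)
        * Real.logb 2 (prob p (fun ω => (X ω, Y ω, W ω)) (a, b, c)) := by
  simp [H, Fintype.sum_prod_type]

lemma H_equiv (e : A ≃ B) (f : Ω → A) (g : Ω → B) (hfg : ∀ ω, g ω = e (f ω)) :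
    H p g = H p f := by
  unfold H
  have h : ∀ b, prob p g b = prob p f (e.symm b) := fun b =>
    prob_congr (fun ω => by rw [hfg ω]; exact (Equiv.apply_eq_iff_eq_symm_apply e))
  simp_rw [h]
  congr 1
  exact Fintype.sum_equiv e.symm _ _ fun b => rfl


end Helpers

section Aux
variable {A B C : Type*} [Fintype A] [Fintype B] [Fintype C]

lemma sum3_left (t : A → B → C → ℝ) (g : A → C → ℝ) :
    ∑ a, ∑ b, ∑ c, t a b c * g a c = ∑ a, ∑ c, (∑ b, t a b c) * g a c := by
  refine Finset.sum_congr rfl fun a _ => ?_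
  rw [Finset.sum_comm]
  exact Finset.sum_congr rfl fun c _ => (Finset.sum_mul _ _ _).symm

lemma sum3_mid (t : A → B → C → ℝ) (g : B → C → ℝ) :
    ∑ a, ∑ b, ∑ c, t a b c * g b c = ∑ b, ∑ c, (∑ a, t a b c) * g b c := by
  rw [Finset.sum_comm]
  refine Finset.sum_congr rfl fun b _ => ?_
  rw [Finset.sum_comm]
  exact Finset.sum_congr rfl fun c _ => (Finset.sum_mul _ _ _).symm

lemma sum3_right (t : A → B → C → ℝ) (g : C → ℝ) :
    ∑ a, ∑ b, ∑ c, t a b c * g c = ∑ c, (∑ a, ∑ b, t a b c) * g c := by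
  calc ∑ a, ∑ b, ∑ c, t a b c * g c
      = ∑ a, ∑ c, ∑ b, t a b c * g c :=
        Finset.sum_congr rfl fun a _ => Finset.sum_comm
    _ = ∑ c, ∑ a, ∑ b, t a b c * g c := Finset.sum_comm
    _ = ∑ c, (∑ a, ∑ b, t a b c) * g c := by
        refine Finset.sum_congr rfl fun c _ => ?_
        rw [Finset.sum_mul]
        exact Finset.sum_congr rfl fun a _ => (Finset.sum_mul _ _ _).symm

lemma triple_comm (t : A → B → C → ℝ) :
    ∑ a, ∑ b, ∑ c, t a b c = ∑ c, ∑ a, ∑ b, t a b c := by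
  have h := sum3_right t (fun _ => (1:ℝ))
  simpa using h

lemma chain_eq_aux (t : A → B → C → ℝ) (a2 : A → C → ℝ) (b2 : B → C → ℝ) (c1 : C → ℝ)
    (tnn : ∀ a b c, 0 ≤ t a b c)
    (hm1 : ∀ a c, ∑ b, t a b c = a2 a c)
    (hm2 : ∀ b c, ∑ a, t a b c = b2 b c)
    (hm3 : ∀ c, ∑ a, ∑ b, t a b c = c1 c)
    (hci : ∀ a b c, t a b c * c1 c = a2 a c * b2 b c) :
    ∑ a, ∑ b, ∑ c, t a b c * Real.logb 2 (t a b c)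
      = (∑ a, ∑ c, a2 a c * Real.logb 2 (a2 a c))
        + (∑ b, ∑ c, b2 b c * Real.logb 2 (b2 b c))
        - ∑ c, c1 c * Real.logb 2 (c1 c) := by
  have hta : ∀ a b c, t a b c ≤ a2 a c := fun a b c =>
    hm1 a c ▸ Finset.single_le_sum (fun b _ => tnn a b c) (Finset.mem_univ b)
  have htb : ∀ a b c, t a b c ≤ b2 b c := fun a b c =>
    hm2 b c ▸ Finset.single_le_sum (fun a _ => tnn a b c) (Finset.mem_univ a)
  have htc : ∀ a b c, t a b c ≤ c1 c := by
    intro a b c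
    calc t a b c ≤ ∑ b, t a b c :=
          Finset.single_le_sum (fun b _ => tnn a b c) (Finset.mem_univ b)
      _ ≤ ∑ a, ∑ b, t a b c :=
          Finset.single_le_sum (fun a _ => Finset.sum_nonneg fun b _ => tnn a b c)
            (Finset.mem_univ a)
      _ = c1 c := hm3 c
  have key : ∀ a b c, t a b c * Real.logb 2 (t a b c)
      = t a b c * Real.logb 2 (a2 a c) + t a b c * Real.logb 2 (b2 b c)
        - t a b c * Real.logb 2 (c1 c) := by
    intro a b c
    rcases eq_or_lt_of_le (tnn a b c) with h0 | h0
    · simp [← h0]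
    · have hc : 0 < c1 c := lt_of_lt_of_le h0 (htc a b c)
      have ha : 0 < a2 a c := lt_of_lt_of_le h0 (hta a b c)
      have hb : 0 < b2 b c := lt_of_lt_of_le h0 (htb a b c)
      have hl := congrArg (Real.logb 2) (hci a b c)
      rw [Real.logb_mul (ne_of_gt h0) (ne_of_gt hc),
        Real.logb_mul (ne_of_gt ha) (ne_of_gt hb)] at hl
      have h2 : Real.logb 2 (t a b c)
          = Real.logb 2 (a2 a c) + Real.logb 2 (b2 b c) - Real.logb 2 (c1 c) := by
        linarith
      rw [h2]; ring
  calc ∑ a, ∑ b, ∑ c, t a b c * Real.logb 2 (t a b c)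
      = ∑ a, ∑ b, ∑ c, (t a b c * Real.logb 2 (a2 a c)
          + t a b c * Real.logb 2 (b2 b c) - t a b c * Real.logb 2 (c1 c)) := by
        exact Finset.sum_congr rfl fun a _ => Finset.sum_congr rfl fun b _ =>
          Finset.sum_congr rfl fun c _ => key a b c
    _ = (∑ a, ∑ b, ∑ c, t a b c * Real.logb 2 (a2 a c))
        + (∑ a, ∑ b, ∑ c, t a b c * Real.logb 2 (b2 b c))
        - ∑ a, ∑ b, ∑ c, t a b c * Real.logb 2 (c1 c) := by
        simp [Finset.sum_add_distrib, Finset.sum_sub_distrib]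
    _ = (∑ a, ∑ c, a2 a c * Real.logb 2 (a2 a c))
        + (∑ b, ∑ c, b2 b c * Real.logb 2 (b2 b c))
        - ∑ c, c1 c * Real.logb 2 (c1 c) := by
        rw [sum3_left, sum3_mid, sum3_right]
        have e1 : ∑ a, ∑ c, (∑ b, t a b c) * Real.logb 2 (a2 a c)
            = ∑ a, ∑ c, a2 a c * Real.logb 2 (a2 a c) :=
          Finset.sum_congr rfl fun a _ => Finset.sum_congr rfl fun c _ => by rw [hm1]
        have e2 : ∑ b, ∑ c, (∑ a, t a b c) * Real.logb 2 (b2 b c)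
            = ∑ b, ∑ c, b2 b c * Real.logb 2 (b2 b c) :=
          Finset.sum_congr rfl fun b _ => Finset.sum_congr rfl fun c _ => by rw [hm2]
        have e3 : ∑ c, (∑ a, ∑ b, t a b c) * Real.logb 2 (c1 c)
            = ∑ c, c1 c * Real.logb 2 (c1 c) :=
          Finset.sum_congr rfl fun c _ => by rw [hm3]
        rw [e1, e2, e3]


lemma gibbs_aux (t : A → B → C → ℝ) (a2 : A → C → ℝ) (b2 : B → C → ℝ) (c1 : C → ℝ)
    (tnn : ∀ a b c, 0 ≤ t a b c)
    (hm1 : ∀ a c, ∑ b, t a b c = a2 a c)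
    (hm2 : ∀ b c, ∑ a, t a b c = b2 b c)
    (hm3 : ∀ c, ∑ a, ∑ b, t a b c = c1 c)
    (htot : ∑ c, c1 c = 1) :
    (∑ a, ∑ c, a2 a c * Real.logb 2 (a2 a c))
      + (∑ b, ∑ c, b2 b c * Real.logb 2 (b2 b c))
      - ∑ c, c1 c * Real.logb 2 (c1 c)
    ≤ ∑ a, ∑ b, ∑ c, t a b c * Real.logb 2 (t a b c) := by
  classical
  have a2nn : ∀ a c, 0 ≤ a2 a c := fun a c =>
    hm1 a c ▸ Finset.sum_nonneg fun b _ => tnn a b c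
  have b2nn : ∀ b c, 0 ≤ b2 b c := fun b c =>
    hm2 b c ▸ Finset.sum_nonneg fun a _ => tnn a b c
  have c1nn : ∀ c, 0 ≤ c1 c := fun c =>
    hm3 c ▸ Finset.sum_nonneg fun a _ => Finset.sum_nonneg fun b _ => tnn a b c
  have hta : ∀ a b c, t a b c ≤ a2 a c := fun a b c =>
    hm1 a c ▸ Finset.single_le_sum (fun b _ => tnn a b c) (Finset.mem_univ b)
  have htb : ∀ a b c, t a b c ≤ b2 b c := fun a b c =>
    hm2 b c ▸ Finset.single_le_sum (fun a _ => tnn a b c) (Finset.mem_univ a)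
  have htc : ∀ a b c, t a b c ≤ c1 c := by
    intro a b c
    calc t a b c ≤ ∑ b, t a b c :=
          Finset.single_le_sum (fun b _ => tnn a b c) (Finset.mem_univ b)
      _ ≤ ∑ a, ∑ b, t a b c :=
          Finset.single_le_sum (fun a _ => Finset.sum_nonneg fun b _ => tnn a b c)
            (Finset.mem_univ a)
      _ = c1 c := hm3 c
  set q : A → B → C → ℝ :=
    fun a b c => if c1 c = 0 then 0 else a2 a c * b2 b c / c1 c with hq
  have qnn : ∀ a b c, 0 ≤ q a b c := by
    intro a b c
    rw [hq]; dsimp only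
    split
    · exact le_refl _
    · exact div_nonneg (mul_nonneg (a2nn a c) (b2nn b c)) (c1nn c)
  -- pointwise Gibbs bound
  have pt : ∀ a b c, t a b c - q a b c
      ≤ t a b c * Real.log (t a b c) - t a b c * Real.log (q a b c) := by
    intro a b c
    rcases eq_or_lt_of_le (tnn a b c) with h0 | h0
    · rw [← h0]; simp [qnn a b c]
    · have hc : 0 < c1 c := lt_of_lt_of_le h0 (htc a b c)
      have ha : 0 < a2 a c := lt_of_lt_of_le h0 (hta a b c)
      have hb : 0 < b2 b c := lt_of_lt_of_le h0 (htb a b c)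
      have hqpos : 0 < q a b c := by
        rw [hq]; dsimp only
        rw [if_neg (ne_of_gt hc)]
        positivity
      have hlog := Real.log_le_sub_one_of_pos (div_pos hqpos h0)
      rw [Real.log_div (ne_of_gt hqpos) (ne_of_gt h0)] at hlog
      have hmul := mul_le_mul_of_nonneg_left hlog (le_of_lt h0)
      have hfield : t a b c * (q a b c / t a b c - 1) = q a b c - t a b c := by
        field_simp
      nlinarith [hmul, hfield]
  -- total mass of q is 1
  have hsq : ∑ a, ∑ b, ∑ c, q a b c = 1 := by
    rw [triple_comm, ← htot]
    refine Finset.sum_congr rfl fun c _ => ?_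
    rcases eq_or_ne (c1 c) 0 with hc | hc
    · simp [hq, hc]
    · have hsa : ∑ a, a2 a c = c1 c := by
        simp_rw [← hm1]; exact hm3 c
      have hsb : ∑ b, b2 b c = c1 c := by
        simp_rw [← hm2]; rw [Finset.sum_comm]; exact hm3 c
      have hrw : ∀ a, ∑ b, q a b c = a2 a c * (∑ b, b2 b c) / c1 c := by
        intro a
        simp only [hq, if_neg hc]
        rw [← Finset.sum_div, ← Finset.mul_sum]
      simp_rw [hrw, hsb]
      rw [← Finset.sum_div, ← Finset.sum_mul, hsa]
      field_simp
  have hst : ∑ a, ∑ b, ∑ c, t a b c = 1 := by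
    rw [triple_comm]
    simp_rw [hm3]
    exact htot
  -- sum of pointwise bounds
  have big : 0 ≤ ∑ a, ∑ b, ∑ c,
      (t a b c * Real.log (t a b c) - t a b c * Real.log (q a b c)) := by
    have h1 : ∑ a, ∑ b, ∑ c, (t a b c - q a b c)
        ≤ ∑ a, ∑ b, ∑ c, (t a b c * Real.log (t a b c) - t a b c * Real.log (q a b c)) :=
      Finset.sum_le_sum fun a _ => Finset.sum_le_sum fun b _ =>
        Finset.sum_le_sum fun c _ => pt a b c
    have h2 : ∑ a, ∑ b, ∑ c, (t a b c - q a b c) = 0 := by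
      simp only [Finset.sum_sub_distrib]
      rw [hst, hsq]; ring
    linarith
  -- pointwise logb identity
  have ptlog : ∀ a b c,
      t a b c * Real.logb 2 (t a b c) + t a b c * Real.logb 2 (c1 c)
        - t a b c * Real.logb 2 (a2 a c) - t a b c * Real.logb 2 (b2 b c)
      = (Real.log 2)⁻¹ * (t a b c * Real.log (t a b c) - t a b c * Real.log (q a b c)) := by
    intro a b c
    rcases eq_or_lt_of_le (tnn a b c) with h0 | h0
    · rw [← h0]; ring
    · have hc : 0 < c1 c := lt_of_lt_of_le h0 (htc a b c)
      have ha : 0 < a2 a c := lt_of_lt_of_le h0 (hta a b c)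
      have hb : 0 < b2 b c := lt_of_lt_of_le h0 (htb a b c)
      have hqv : q a b c = a2 a c * b2 b c / c1 c := by
        rw [hq]; dsimp only; rw [if_neg (ne_of_gt hc)]
      rw [hqv, Real.log_div (ne_of_gt (mul_pos ha hb)) (ne_of_gt hc),
        Real.log_mul (ne_of_gt ha) (ne_of_gt hb)]
      simp only [Real.logb, div_eq_mul_inv]
      ring
  have sum_eq : ∑ a, ∑ b, ∑ c,
      (t a b c * Real.logb 2 (t a b c) + t a b c * Real.logb 2 (c1 c)
        - t a b c * Real.logb 2 (a2 a c) - t a b c * Real.logb 2 (b2 b c))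
      = (Real.log 2)⁻¹ * ∑ a, ∑ b, ∑ c,
          (t a b c * Real.log (t a b c) - t a b c * Real.log (q a b c)) := by
    simp_rw [ptlog, ← Finset.mul_sum]
  have expand : ∑ a, ∑ b, ∑ c,
      (t a b c * Real.logb 2 (t a b c) + t a b c * Real.logb 2 (c1 c)
        - t a b c * Real.logb 2 (a2 a c) - t a b c * Real.logb 2 (b2 b c))
      = (∑ a, ∑ b, ∑ c, t a b c * Real.logb 2 (t a b c))
        + (∑ a, ∑ b, ∑ c, t a b c * Real.logb 2 (c1 c))
        - (∑ a, ∑ b, ∑ c, t a b c * Real.logb 2 (a2 a c))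
        - (∑ a, ∑ b, ∑ c, t a b c * Real.logb 2 (b2 b c)) := by
    simp only [Finset.sum_sub_distrib, Finset.sum_add_distrib]
  have cA : ∑ a, ∑ b, ∑ c, t a b c * Real.logb 2 (a2 a c)
      = ∑ a, ∑ c, a2 a c * Real.logb 2 (a2 a c) := by
    rw [sum3_left]
    exact Finset.sum_congr rfl fun a _ => Finset.sum_congr rfl fun c _ => by rw [hm1]
  have cB : ∑ a, ∑ b, ∑ c, t a b c * Real.logb 2 (b2 b c)
      = ∑ b, ∑ c, b2 b c * Real.logb 2 (b2 b c) := by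
    rw [sum3_mid]
    exact Finset.sum_congr rfl fun b _ => Finset.sum_congr rfl fun c _ => by rw [hm2]
  have cC : ∑ a, ∑ b, ∑ c, t a b c * Real.logb 2 (c1 c)
      = ∑ c, c1 c * Real.logb 2 (c1 c) := by
    rw [sum3_right]
    exact Finset.sum_congr rfl fun c _ => by rw [hm3]
  have hlog2 : (0:ℝ) ≤ (Real.log 2)⁻¹ :=
    inv_nonneg.mpr (le_of_lt (Real.log_pos (by norm_num)))
  have final : 0 ≤ (∑ a, ∑ b, ∑ c, t a b c * Real.logb 2 (t a b c))
      + (∑ c, c1 c * Real.logb 2 (c1 c))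
      - (∑ a, ∑ c, a2 a c * Real.logb 2 (a2 a c))
      - (∑ b, ∑ c, b2 b c * Real.logb 2 (b2 b c)) := by
    have := mul_nonneg hlog2 big
    rw [← sum_eq] at this
    rw [expand, cA, cB, cC] at this
    linarith
  linarith


end Aux

section Bridge
variable {Ω : Type*} [Fintype Ω] {p : Ω → ℝ}
variable {A B C : Type*} [Fintype A] [DecidableEq A] [Fintype B] [DecidableEq B]
  [Fintype C] [DecidableEq C]

lemma condIndep_H (hp : IsPMF p) (X : Ω → A) (Y : Ω → B) (W : Ω → C)
    (h : CondIndep p X Y W) :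
    H p (fun ω => (X ω, Y ω, W ω))
      = H p (fun ω => (X ω, W ω)) + H p (fun ω => (Y ω, W ω)) - H p W := by
  have hc := chain_eq_aux
    (fun a b c => prob p (fun ω => (X ω, Y ω, W ω)) (a, b, c))
    (fun a c => prob p (fun ω => (X ω, W ω)) (a, c))
    (fun b c => prob p (fun ω => (Y ω, W ω)) (b, c))
    (fun c => prob p W c)
    (fun a b c => prob_nonneg hp _ _)
    (marg_mid X Y W) (marg_fst X Y W) (marg_w X Y W)
    (fun a b c => h a b c)
  rw [H_pair X W, H_pair Y W, H_triple X Y W,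
    show H p W = -∑ c, prob p W c * Real.logb 2 (prob p W c) from rfl]
  linarith [hc]

lemma cMI_nonneg (hp : IsPMF p) (X : Ω → A) (Y : Ω → B) (W : Ω → C) :
    0 ≤ H p (fun ω => (X ω, W ω)) + H p (fun ω => (Y ω, W ω))
      - H p (fun ω => (X ω, Y ω, W ω)) - H p W := by
  have hg := gibbs_aux
    (fun a b c => prob p (fun ω => (X ω, Y ω, W ω)) (a, b, c))
    (fun a c => prob p (fun ω => (X ω, W ω)) (a, c))
    (fun b c => prob p (fun ω => (Y ω, W ω)) (b, c))
    (fun c => prob p W c)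
    (fun a b c => prob_nonneg hp _ _)
    (marg_mid X Y W) (marg_fst X Y W) (marg_w X Y W)
    (sum_prob hp W)
  rw [H_pair X W, H_pair Y W, H_triple X Y W,
    show H p W = -∑ c, prob p W c * Real.logb 2 (prob p W c) from rfl]
  linarith [hg]

lemma indep_H (hp : IsPMF p) {X : Ω → A} {Y : Ω → B} (h : Indep p X Y) :
    H p (fun ω => (X ω, Y ω)) = H p X + H p Y := by
  have hx1 : ∑ a, prob p X a = 1 := sum_prob hp X
  have hy1 : ∑ b, prob p Y b = 1 := sum_prob hp Y
  have key : ∀ a b, prob p (fun ω => (X ω, Y ω)) (a, b)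
        * Real.logb 2 (prob p (fun ω => (X ω, Y ω)) (a, b))
      = prob p Y b * (prob p X a * Real.logb 2 (prob p X a))
        + prob p X a * (prob p Y b * Real.logb 2 (prob p Y b)) := by
    intro a b
    rw [h a b]
    rcases eq_or_ne (prob p X a) 0 with h1 | h1
    · simp [h1]
    · rcases eq_or_ne (prob p Y b) 0 with h2 | h2
      · simp [h2]
      · rw [Real.logb_mul h1 h2]; ring
  rw [H_pair X Y]
  have : ∑ a, ∑ b, prob p (fun ω => (X ω, Y ω)) (a, b)
        * Real.logb 2 (prob p (fun ω => (X ω, Y ω)) (a, b))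
      = ∑ a, ∑ b, (prob p Y b * (prob p X a * Real.logb 2 (prob p X a))
        + prob p X a * (prob p Y b * Real.logb 2 (prob p Y b))) :=
    Finset.sum_congr rfl fun a _ => Finset.sum_congr rfl fun b _ => key a b
  rw [this]
  have e1 : ∀ a, ∑ b, (prob p Y b * (prob p X a * Real.logb 2 (prob p X a))
        + prob p X a * (prob p Y b * Real.logb 2 (prob p Y b)))
      = prob p X a * Real.logb 2 (prob p X a)
        + prob p X a * ∑ b, prob p Y b * Real.logb 2 (prob p Y b) := by
    intro a
    rw [Finset.sum_add_distrib, ← Finset.sum_mul, hy1, one_mul, ← Finset.mul_sum]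
  simp_rw [e1]
  rw [Finset.sum_add_distrib, ← Finset.sum_mul, hx1, one_mul]
  show -(∑ a, prob p X a * Real.logb 2 (prob p X a)
      + ∑ b, prob p Y b * Real.logb 2 (prob p Y b)) = H p X + H p Y
  unfold H
  ring

lemma indep_marg_left (hp : IsPMF p) {W : Ω → C} {X : Ω → A} {Y : Ω → B}
    (h : Indep p W (fun ω => (X ω, Y ω))) : Indep p W X := by
  intro c a
  have h1 : prob p (fun ω => (W ω, X ω)) (c, a)
      = ∑ y, prob p (fun ω => ((W ω, X ω), Y ω)) ((c, a), y) := (prob_fst _ _ _).symm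
  rw [h1]
  have h2 : ∀ y, prob p (fun ω => ((W ω, X ω), Y ω)) ((c, a), y)
      = prob p W c * prob p (fun ω => (X ω, Y ω)) (a, y) := by
    intro y
    rw [show prob p (fun ω => ((W ω, X ω), Y ω)) ((c, a), y)
        = prob p (fun ω => (W ω, (X ω, Y ω))) (c, (a, y)) from
      prob_congr (fun ω => by simp [Prod.ext_iff]; tauto)]
    exact h c (a, y)
  rw [Finset.sum_congr rfl fun y _ => h2 y, ← Finset.mul_sum]
  congr 1
  exact prob_fst X Y a

lemma indep_marg_right (hp : IsPMF p) {W : Ω → C} {X : Ω → A} {Y : Ω → B}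
    (h : Indep p W (fun ω => (X ω, Y ω))) : Indep p W Y := by
  intro c b
  have h1 : prob p (fun ω => (W ω, Y ω)) (c, b)
      = ∑ x, prob p (fun ω => (X ω, (W ω, Y ω))) (x, (c, b)) := (prob_snd _ _ _).symm
  rw [h1]
  have h2 : ∀ x, prob p (fun ω => (X ω, (W ω, Y ω))) (x, (c, b))
      = prob p W c * prob p (fun ω => (X ω, Y ω)) (x, b) := by
    intro x
    rw [show prob p (fun ω => (X ω, (W ω, Y ω))) (x, (c, b))
        = prob p (fun ω => (W ω, (X ω, Y ω))) (c, (x, b)) from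
      prob_congr (fun ω => by simp [Prod.ext_iff]; tauto)]
    exact h c (x, b)
  rw [Finset.sum_congr rfl fun x _ => h2 x, ← Finset.mul_sum]
  congr 1
  exact prob_snd X Y b

end Bridge

/-- passive/batch setting bound `I(W_post;Z|W_pre) ≤ I(X;Z)`. -/
theorem acquired_epiplexity_le_IXZ_passive
    {Ω : Type*} [Fintype Ω] (p : Ω → ℝ) (hp : IsPMF p)
    {ZT XT WT : Type*} [Fintype ZT] [DecidableEq ZT] [Fintype XT] [DecidableEq XT]
    [Fintype WT] [DecidableEq WT]
    (Z : Ω → ZT) (X : Ω → XT) (Wpre Wpost : Ω → WT)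
    (hmarkov : CondIndep p Z Wpost (fun ω => (X ω, Wpre ω)))
    (hindep : Indep p Wpre (fun ω => (X ω, Z ω))) :
    cMI p Wpost Z Wpre ≤ MI p X Z := by
  have key : 0 ≤ H p (fun ω => (Z ω, Wpost ω, Wpre ω))
      + H p (fun ω => (X ω, Wpost ω, Wpre ω))
      - H p (fun ω => (Z ω, X ω, Wpost ω, Wpre ω))
      - H p (fun ω => (Wpost ω, Wpre ω)) :=
    cMI_nonneg hp Z X (fun ω => (Wpost ω, Wpre ω))
  have markov : H p (fun ω => (Z ω, Wpost ω, X ω, Wpre ω))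
      = H p (fun ω => (Z ω, X ω, Wpre ω)) + H p (fun ω => (Wpost ω, X ω, Wpre ω))
        - H p (fun ω => (X ω, Wpre ω)) :=
    condIndep_H hp Z Wpost (fun ω => (X ω, Wpre ω)) hmarkov
  have e1 : H p (fun ω => (Z ω, X ω, Wpost ω, Wpre ω))
      = H p (fun ω => (Z ω, Wpost ω, X ω, Wpre ω)) :=
    H_equiv ⟨fun s => (s.1, s.2.2.1, s.2.1, s.2.2.2),
      fun s => (s.1, s.2.2.1, s.2.1, s.2.2.2), fun s => rfl, fun s => rfl⟩
      (fun ω => (Z ω, Wpost ω, X ω, Wpre ω)) _ (fun ω => rfl)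
  have e2 : H p (fun ω => (X ω, Wpost ω, Wpre ω))
      = H p (fun ω => (Wpost ω, X ω, Wpre ω)) :=
    H_equiv ⟨fun s => (s.2.1, s.1, s.2.2), fun s => (s.2.1, s.1, s.2.2),
      fun s => rfl, fun s => rfl⟩ (fun ω => (Wpost ω, X ω, Wpre ω)) _ (fun ω => rfl)
  have e3 : H p (fun ω => (Z ω, Wpost ω, Wpre ω))
      = H p (fun ω => (Wpost ω, Z ω, Wpre ω)) :=
    H_equiv ⟨fun s => (s.2.1, s.1, s.2.2), fun s => (s.2.1, s.1, s.2.2),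
      fun s => rfl, fun s => rfl⟩ (fun ω => (Wpost ω, Z ω, Wpre ω)) _ (fun ω => rfl)
  have e4 : H p (fun ω => (Z ω, X ω, Wpre ω))
      = H p (fun ω => (Wpre ω, X ω, Z ω)) :=
    H_equiv ⟨fun s => (s.2.2, s.2.1, s.1), fun s => (s.2.2, s.2.1, s.1),
      fun s => rfl, fun s => rfl⟩ (fun ω => (Wpre ω, X ω, Z ω)) _ (fun ω => rfl)
  have i1 : H p (fun ω => (Wpre ω, X ω, Z ω)) = H p Wpre + H p (fun ω => (X ω, Z ω)) :=
    indep_H hp hindep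
  have e5 : H p (fun ω => (X ω, Wpre ω)) = H p (fun ω => (Wpre ω, X ω)) :=
    H_equiv ⟨fun s => (s.2, s.1), fun s => (s.2, s.1), fun s => rfl, fun s => rfl⟩
      (fun ω => (Wpre ω, X ω)) _ (fun ω => rfl)
  have i2 : H p (fun ω => (Wpre ω, X ω)) = H p Wpre + H p X :=
    indep_H hp (indep_marg_left hp hindep)
  have e6 : H p (fun ω => (Z ω, Wpre ω)) = H p (fun ω => (Wpre ω, Z ω)) :=
    H_equiv ⟨fun s => (s.2, s.1), fun s => (s.2, s.1), fun s => rfl, fun s => rfl⟩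
      (fun ω => (Wpre ω, Z ω)) _ (fun ω => rfl)
  have i3 : H p (fun ω => (Wpre ω, Z ω)) = H p Wpre + H p Z :=
    indep_H hp (indep_marg_right hp hindep)
  unfold cMI MI
  linarith [key, markov, e1, e2, e3, e4, e5, e6, i1, i2, i3]


end PhysIntel
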